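/- arXiv:1206.2616 — 4 statements merged into one kernel-verified Lean document; each statement's English description precedes it below -/
import Mathlib

section
/- Let k ≥ 1 be an integer. Define a_1 = 1 and, for j > 1, a_j = 1 + Σ_{i=1}^{j-1} a_i². Let ρ > 0 satisfy 4ρ a_k ≤ 1, and define b_1 = 4 and, for j > 1, b_j = (1 + 8a_j)((1 + ρ b_{j-1})(1 + 8a_j) + 1). Let λ > 0, let E be a real inner product space of dimension k, let q be a nonnegative symmetric bilinear form on E (we write q(v) for q(v,v)), and let ψ_1, …, ψ_k ∈ E satisfy |⟨ψ_i, ψ_j⟩ − δ_{ij}| ≤ ρ and q(ψ_i) ≤ λ(1 + ρ) for all 1 ≤ i, j ≤ k. Then there exists an orthonormal basis F_1, …, F_k of E such that q(F_i) ≤ λ(1 + ρ b_k) for every i ∈ {1, …, k}. -/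
/-!
Löwdin's symmetric orthonormalization. Let `G` be the Gram matrix of `ψ` and `F = G^(-1/2) ψ`.
By Gershgorin's theorem the spectrum of `G` lies within `kρ` of `1`, hence every entry of
`G^(-1/2)` lies within `kρ` of the identity matrix and its rows have `ℓ¹`-norm at most `1 + k²ρ`.
Cauchy–Schwarz for `q` then gives `q(F_c) ≤ (1 + k²ρ)² λ(1 + ρ)`, and the recurrences
(`a_k ≥ k²/2`, `b_k ≥ 64 a_k²` for `k ≥ 2`) make `(1 + ρ)(1 + k²ρ)² ≤ 1 + ρ b_k`.
-/

open RealInnerProductSpace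

section Recurrences

variable {a b : ℕ → ℝ}

theorem one_add_sq_le_of_recurrence
    (ha : ∀ j, 2 ≤ j → a j = 1 + ∑ i ∈ Finset.Icc 1 (j - 1), a i ^ 2) {j : ℕ} (hj : 1 ≤ j) :
    1 + a j ^ 2 ≤ a (j + 1) := by
  rw [ha (j + 1) (by omega), Nat.add_sub_cancel]
  have := Finset.single_le_sum (f := fun i => a i ^ 2) (fun i _ => sq_nonneg (a i))
    (Finset.mem_Icc.2 ⟨hj, le_rfl⟩)
  linarith

theorem natCast_le_of_recurrence (ha1 : a 1 = 1)
    (ha : ∀ j, 2 ≤ j → a j = 1 + ∑ i ∈ Finset.Icc 1 (j - 1), a i ^ 2) {j : ℕ} (hj : 1 ≤ j) :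
    (j : ℝ) ≤ a j := by
  induction j, hj using Nat.le_induction with
  | base => simp [ha1]
  | succ j hj ih =>
    have hrec := one_add_sq_le_of_recurrence ha hj
    have hj' : (1 : ℝ) ≤ j := by exact_mod_cast hj
    push_cast
    nlinarith

theorem sq_le_two_mul_of_recurrence (ha1 : a 1 = 1)
    (ha : ∀ j, 2 ≤ j → a j = 1 + ∑ i ∈ Finset.Icc 1 (j - 1), a i ^ 2) {j : ℕ} (hj : 1 ≤ j) :
    (j : ℝ) ^ 2 ≤ 2 * a j := by
  obtain rfl | hj2 := hj.eq_or_lt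
  · norm_num [ha1]
  obtain ⟨m, rfl⟩ : ∃ m, j = m + 1 := ⟨j - 1, by omega⟩
  have hrec := one_add_sq_le_of_recurrence ha (j := m) (by omega)
  have hm := natCast_le_of_recurrence ha1 ha (j := m) (by omega)
  push_cast
  nlinarith [sq_nonneg ((m : ℝ) - 1)]

theorem nonneg_of_b_recurrence (ha1 : a 1 = 1)
    (ha : ∀ j, 2 ≤ j → a j = 1 + ∑ i ∈ Finset.Icc 1 (j - 1), a i ^ 2) {ρ : ℝ} (hρ : 0 ≤ ρ)
    (hb1 : b 1 = 4)
    (hb : ∀ j, 2 ≤ j → b j = (1 + 8 * a j) * ((1 + ρ * b (j - 1)) * (1 + 8 * a j) + 1))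
    {j : ℕ} (hj : 1 ≤ j) : 0 ≤ b j := by
  induction j, hj using Nat.le_induction with
  | base => norm_num [hb1]
  | succ j hj ih =>
    have haj : (0 : ℝ) ≤ a (j + 1) :=
      (Nat.cast_nonneg _).trans (natCast_le_of_recurrence ha1 ha (by omega))
    rw [hb (j + 1) (by omega), Nat.add_sub_cancel]
    have : 0 ≤ ρ * b j := mul_nonneg hρ ih
    positivity

theorem one_add_mul_one_add_sq_le_of_recurrence (ha1 : a 1 = 1)
    (ha : ∀ j, 2 ≤ j → a j = 1 + ∑ i ∈ Finset.Icc 1 (j - 1), a i ^ 2) {ρ : ℝ} (hρ : 0 ≤ ρ)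
    (hb1 : b 1 = 4)
    (hb : ∀ j, 2 ≤ j → b j = (1 + 8 * a j) * ((1 + ρ * b (j - 1)) * (1 + 8 * a j) + 1))
    {k : ℕ} (hk : 1 ≤ k) (hρa : 4 * ρ * a k ≤ 1) :
    (1 + ρ) * (1 + k * (k * ρ)) ^ 2 ≤ 1 + ρ * b k := by
  obtain rfl | hk2 := hk.eq_or_lt
  · rw [ha1] at hρa
    rw [hb1]
    push_cast
    nlinarith [mul_nonneg hρ hρ, mul_nonneg (mul_nonneg hρ hρ) hρ]
  set x := (k : ℝ) * (k * ρ)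
  have hx0 : 0 ≤ x := by positivity
  have hxa : x ≤ 2 * a k * ρ := by
    have := mul_le_mul_of_nonneg_right (sq_le_two_mul_of_recurrence ha1 ha hk) hρ
    linarith
  have ha2 : (2 : ℝ) ≤ a k :=
    le_trans (by exact_mod_cast hk2) (natCast_le_of_recurrence ha1 ha hk)
  have hbk : 64 * a k ^ 2 ≤ b k := by
    have hb' := mul_nonneg hρ (nonneg_of_b_recurrence ha1 ha hρ hb1 hb (j := k - 1) (by omega))
    rw [hb k hk2]
    nlinarith [mul_nonneg hb' (sq_nonneg (1 + 8 * a k))]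
  have hx2 : x ≤ 1 / 2 := by nlinarith
  calc (1 + ρ) * (1 + x) ^ 2 ≤ (1 + ρ) * (1 + 5 / 2 * x) := by gcongr; nlinarith
    _ ≤ 1 + ρ * (1 + 6 * a k) := by nlinarith
    _ ≤ 1 + ρ * (64 * a k ^ 2) := by gcongr; nlinarith
    _ ≤ 1 + ρ * b k := by gcongr

theorem abs_inv_sqrt_sub_one_le {x t : ℝ} (ht : t ≤ 1 / 4) (hx : |x - 1| ≤ t) :
    |(√x)⁻¹ - 1| ≤ t := by
  have ht0 : 0 ≤ t := (abs_nonneg _).trans hx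
  rw [abs_le] at hx ⊢
  have hx0 : 0 < x := by linarith
  have hs : 0 < √x := Real.sqrt_pos.2 hx0
  have hss : √x ^ 2 = x := Real.sq_sqrt hx0.le
  rw [inv_eq_one_div, div_sub_one hs.ne', div_le_iff₀ hs, le_div_iff₀ hs]
  constructor
  · nlinarith [sq_nonneg ((1 - t) * √x - 1), mul_nonneg ht0 ht0,
      mul_nonneg (mul_nonneg ht0 ht0) ht0]
  · nlinarith [sq_nonneg ((1 + t) * √x - 1), mul_nonneg ht0 ht0,
      mul_nonneg (mul_nonneg ht0 ht0) ht0]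

namespace Matrix

variable {n : Type*} [Fintype n] [DecidableEq n]

theorem abs_sub_one_le_of_mem_spectrum {A : Matrix n n ℝ} {ρ : ℝ}
    (hA : ∀ i j, |A i j - (1 : Matrix n n ℝ) i j| ≤ ρ) {x : ℝ} (hx : x ∈ spectrum ℝ A) :
    |x - 1| ≤ Fintype.card n * ρ := by
  rw [← spectrum_toLin', ← Module.End.hasEigenvalue_iff_mem_spectrum] at hx
  obtain ⟨k, hk⟩ := eigenvalue_mem_ball hx
  rw [Metric.mem_closedBall, Real.dist_eq] at hk
  have hoff : ∑ j ∈ Finset.univ.erase k, ‖A k j‖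
      = ∑ j ∈ Finset.univ.erase k, |A k j - (1 : Matrix n n ℝ) k j| :=
    Finset.sum_congr rfl fun j hj => by
      rw [one_apply_ne (Finset.ne_of_mem_erase hj).symm, sub_zero, Real.norm_eq_abs]
  calc |x - 1| ≤ |x - A k k| + |A k k - (1 : Matrix n n ℝ) k k| := by
        rw [one_apply_eq]; exact abs_sub_le _ _ _
    _ ≤ ∑ j, |A k j - (1 : Matrix n n ℝ) k j| := by
        rw [← Finset.sum_erase_add _ _ (Finset.mem_univ k), ← hoff]; gcongr
    _ ≤ ∑ _j : n, ρ := Finset.sum_le_sum fun j _ => hA k j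
    _ = Fintype.card n * ρ := by simp

theorem sum_abs_le_of_abs_sub_one_le {M : Matrix n n ℝ} {t : ℝ}
    (hM : ∀ i j, |M i j - (1 : Matrix n n ℝ) i j| ≤ t) (i : n) :
    ∑ j, |M i j| ≤ 1 + Fintype.card n * t :=
  calc ∑ j, |M i j| ≤ ∑ j, (|(1 : Matrix n n ℝ) i j| + t) :=
        Finset.sum_le_sum fun j _ => by
          linarith [abs_sub_abs_le_abs_sub (M i j) ((1 : Matrix n n ℝ) i j), hM i j]
    _ = 1 + Fintype.card n * t := by
        simp [Finset.sum_add_distrib, one_apply, abs_ite]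

theorem IsHermitian.cfc_apply {A : Matrix n n ℝ} (hA : A.IsHermitian) (f : ℝ → ℝ) (i j : n) :
    cfc f A i j = ∑ l, hA.eigenvectorUnitary i l * f (hA.eigenvalues l) *
      hA.eigenvectorUnitary j l := by
  simp [hA.cfc_eq, IsHermitian.cfc, Unitary.conjStarAlgAut_apply, mul_apply, diagonal_apply]

theorem IsHermitian.abs_cfc_apply_le {A : Matrix n n ℝ} (hA : A.IsHermitian) {f : ℝ → ℝ}
    {t : ℝ} (hf : ∀ x ∈ spectrum ℝ A, |f x| ≤ t) (i j : n) : |cfc f A i j| ≤ t := by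
  set U : Matrix n n ℝ := (hA.eigenvectorUnitary : Matrix n n ℝ)
  have hU : ∀ i j, ∑ l, U i l * U j l = (1 : Matrix n n ℝ) i j := fun i j => by
    simpa [U, mul_apply] using congr_fun₂ (Unitary.coe_mul_star_self hA.eigenvectorUnitary) i j
  have hf' (l : n) : |f (hA.eigenvalues l)| ≤ t := hf _ (hA.eigenvalues_mem_spectrum_real l)
  rw [hA.cfc_apply]
  -- `2 |u| |v| ≤ u² + v²`, and the rows of `U` are unit vectors
  calc |∑ l, U i l * f (hA.eigenvalues l) * U j l|
      ≤ ∑ l, t * ((U i l ^ 2 + U j l ^ 2) / 2) := by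
        refine (Finset.abs_sum_le_sum_abs _ _).trans (Finset.sum_le_sum fun l _ => ?_)
        rw [abs_mul, abs_mul, mul_right_comm, mul_comm t]
        refine mul_le_mul ?_ (hf' l) (abs_nonneg _) (by positivity)
        nlinarith [sq_abs (U i l), sq_abs (U j l), sq_nonneg (|U i l| - |U j l|)]
    _ = t := by
        simp only [sq, ← Finset.mul_sum, ← Finset.sum_div, Finset.sum_add_distrib, hU]
        simp

end Matrix

section Orthonormalization

open Matrix

variable {ι E : Type*} [Fintype ι] [NormedAddCommGroup E] [InnerProductSpace ℝ E]

theorem orthonormal_sum_smul_of_mul_gram_mul_transpose_eq_one [DecidableEq ι] {ψ : ι → E}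
    {M : Matrix ι ι ℝ} (hM : M * gram ℝ ψ * Mᵀ = 1) :
    Orthonormal ℝ fun c => ∑ i, M c i • ψ i := by
  rw [orthonormal_iff_ite]
  intro c d
  rw [← one_apply, ← hM, ← star_dotProduct_gram_mulVec]
  simp only [mul_apply, dotProduct, mulVec, Finset.mul_sum, Finset.sum_mul, star_trivial,
    gram_apply, transpose_apply]
  rw [Finset.sum_comm]
  simp only [mul_comm, mul_left_comm]

theorem LinearMap.BilinForm.apply_sum_smul_le {q : LinearMap.BilinForm ℝ E}
    (hq : LinearMap.IsSymm q) (hpos : ∀ v, 0 ≤ q v v) {ψ : ι → E} {C : ℝ}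
    (hC : ∀ i, q (ψ i) (ψ i) ≤ C) (c : ι → ℝ) :
    q (∑ i, c i • ψ i) (∑ i, c i • ψ i) ≤ (∑ i, |c i|) ^ 2 * C := by
  have hqC : ∀ i j, |q (ψ i) (ψ j)| ≤ C := fun i j =>
    abs_le_of_sq_le_sq ((q.apply_sq_le_of_symm hpos hq _ _).trans
      (by nlinarith [hpos (ψ i), hpos (ψ j), hC i, hC j])) ((hpos _).trans (hC i))
  simp only [map_sum, map_smul, LinearMap.sum_apply, LinearMap.smul_apply, smul_eq_mul]
  calc ∑ j, c j * ∑ i, c i * q (ψ i) (ψ j) ≤ ∑ j, ∑ i, |c j| * |c i| * C := by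
        refine Finset.sum_le_sum fun j _ => ?_
        rw [Finset.mul_sum]
        refine Finset.sum_le_sum fun i _ => ?_
        calc c j * (c i * q (ψ i) (ψ j)) ≤ |c j| * |c i| * |q (ψ i) (ψ j)| := by
              rw [← abs_mul, ← abs_mul, ← mul_assoc]; exact le_abs_self _
          _ ≤ |c j| * |c i| * C := by gcongr; exact hqC i j
    _ = (∑ i, |c i|) ^ 2 * C := by
        rw [sq, Finset.sum_mul_sum, Finset.sum_mul]
        simp only [Finset.sum_mul]

theorem exists_orthonormal_sum_smul_of_abs_sub_one_le [DecidableEq ι] (ψ : ι → E) {t : ℝ}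
    (ht : t ≤ 1 / 4) (hψ : ∀ x ∈ spectrum ℝ (gram ℝ ψ), |x - 1| ≤ t) :
    ∃ M : Matrix ι ι ℝ, Orthonormal ℝ (fun c => ∑ i, M c i • ψ i) ∧
      ∀ i j, |M i j - (1 : Matrix ι ι ℝ) i j| ≤ t := by
  set G := gram ℝ ψ
  have hG : G.IsHermitian := isHermitian_gram ℝ ψ
  have hcont (f : ℝ → ℝ) : ContinuousOn f (spectrum ℝ G) := G.finite_real_spectrum.continuousOn f
  set M := cfc (fun x => (√x)⁻¹) G
  refine ⟨M, orthonormal_sum_smul_of_mul_gram_mul_transpose_eq_one ?_, fun i j => ?_⟩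
  · have hMT : Mᵀ = M := by
      have := (cfc_predicate (fun x => (√x)⁻¹) G).star_eq
      rwa [star_eq_conjTranspose, conjTranspose_eq_transpose_of_trivial] at this
    calc M * G * Mᵀ = cfc (fun x => (√x)⁻¹ * x * (√x)⁻¹) G := by
          rw [hMT, cfc_mul _ _ G (hcont _) (hcont _), cfc_mul _ _ G (hcont _) (hcont _),
            cfc_id' ℝ G]
      _ = cfc (fun _ => 1) G := cfc_congr fun x hx => by
          have hx0 : 0 < x := by linarith [(abs_le.1 (hψ x hx)).1]
          rw [mul_right_comm, ← mul_inv, Real.mul_self_sqrt hx0.le, inv_mul_cancel₀ hx0.ne']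
      _ = 1 := cfc_const_one ℝ G
  · rw [← cfc_const_one ℝ G, ← Matrix.sub_apply, ← cfc_sub _ _ G (hcont _) (hcont _)]
    exact hG.abs_cfc_apply_le (fun x hx => abs_inv_sqrt_sub_one_le ht (hψ x hx)) i j

end Orthonormalization

theorem stmt0_general {E : Type*} [NormedAddCommGroup E] [InnerProductSpace ℝ E]
    (k : ℕ) (hk : 1 ≤ k) (hdim : Module.finrank ℝ E = k)
    (ρ lam : ℝ) (hρ : 0 < ρ) (hlam : 0 < lam)
    (a b : ℕ → ℝ)
    (ha1 : a 1 = 1)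
    (ha : ∀ j, 2 ≤ j → a j = 1 + ∑ i ∈ Finset.Icc 1 (j - 1), (a i) ^ 2)
    (hρa : 4 * ρ * a k ≤ 1)
    (hb1 : b 1 = 4)
    (hb : ∀ j, 2 ≤ j →
      b j = (1 + 8 * a j) * ((1 + ρ * b (j - 1)) * (1 + 8 * a j) + 1))
    (q : E →ₗ[ℝ] E →ₗ[ℝ] ℝ)
    (hsymm : ∀ u v, q u v = q v u)
    (hpos : ∀ v, 0 ≤ q v v)
    (ψ : Fin k → E)
    (hortho : ∀ i j, |⟪ψ i, ψ j⟫ - (if i = j then (1 : ℝ) else 0)| ≤ ρ)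
    (hq : ∀ i, q (ψ i) (ψ i) ≤ lam * (1 + ρ)) :
    ∃ F : Fin k → E, Orthonormal ℝ F ∧ Submodule.span ℝ (Set.range F) = ⊤ ∧
      ∀ i, q (F i) (F i) ≤ lam * (1 + ρ * b k) := by
  have : Nonempty (Fin k) := ⟨⟨0, hk⟩⟩
  have hkρ : (k : ℝ) * ρ ≤ 1 / 4 := by
    nlinarith [natCast_le_of_recurrence ha1 ha hk]
  have hgram (i j : Fin k) : |Matrix.gram ℝ ψ i j - (1 : Matrix (Fin k) (Fin k) ℝ) i j| ≤ ρ := by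
    simpa [Matrix.one_apply] using hortho i j
  have hspec : ∀ x ∈ spectrum ℝ (Matrix.gram ℝ ψ), |x - 1| ≤ k * ρ := fun x hx => by
    simpa using Matrix.abs_sub_one_le_of_mem_spectrum hgram hx
  obtain ⟨M, hMon, hM⟩ := exists_orthonormal_sum_smul_of_abs_sub_one_le ψ hkρ hspec
  refine ⟨_, hMon, hMon.linearIndependent.span_eq_top_of_card_eq_finrank (by simp [hdim]),
    fun c => ?_⟩
  calc q (∑ i, M c i • ψ i) (∑ i, M c i • ψ i) ≤ (∑ i, |M c i|) ^ 2 * (lam * (1 + ρ)) :=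
        LinearMap.BilinForm.apply_sum_smul_le ⟨hsymm⟩ hpos hq (M c)
    _ ≤ (1 + k * (k * ρ)) ^ 2 * (lam * (1 + ρ)) := by
        have := Matrix.sum_abs_le_of_abs_sub_one_le hM c
        rw [Fintype.card_fin] at this
        gcongr
    _ = lam * ((1 + ρ) * (1 + k * (k * ρ)) ^ 2) := by ring
    _ ≤ lam * (1 + ρ * b k) := by
        gcongr
        exact one_add_mul_one_add_sq_le_of_recurrence ha1 ha hρ.le hb1 hb hk hρa

/-- Lemma 2.1 (Bertrand–Colbois type lemma): given an almost-orthonormal family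
`ψ₁, …, ψ_k` with controlled energy `q(ψ_i) ≤ λ(1+ρ)`, there is an orthonormal
basis `F₁, …, F_k` with `q(F_i) ≤ λ(1 + ρ b_k)`. -/
theorem stmt0 {E : Type*} [NormedAddCommGroup E] [InnerProductSpace ℝ E]
    [FiniteDimensional ℝ E]
    (k : ℕ) (hk : 1 ≤ k) (hdim : Module.finrank ℝ E = k)
    (ρ lam : ℝ) (hρ : 0 < ρ) (hlam : 0 < lam)
    (a b : ℕ → ℝ)
    (ha1 : a 1 = 1)
    (ha : ∀ j, 2 ≤ j → a j = 1 + ∑ i ∈ Finset.Icc 1 (j - 1), (a i) ^ 2)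
    (hρa : 4 * ρ * a k ≤ 1)
    (hb1 : b 1 = 4)
    (hb : ∀ j, 2 ≤ j →
      b j = (1 + 8 * a j) * ((1 + ρ * b (j - 1)) * (1 + 8 * a j) + 1))
    (q : E →ₗ[ℝ] E →ₗ[ℝ] ℝ)
    (hsymm : ∀ u v, q u v = q v u)
    (hpos : ∀ v, 0 ≤ q v v)
    (ψ : Fin k → E)
    (hortho : ∀ i j, |⟪ψ i, ψ j⟫ - (if i = j then (1 : ℝ) else 0)| ≤ ρ)
    (hq : ∀ i, q (ψ i) (ψ i) ≤ lam * (1 + ρ)) :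
    ∃ F : Fin k → E, Orthonormal ℝ F ∧ Submodule.span ℝ (Set.range F) = ⊤ ∧
      ∀ i, q (F i) (F i) ≤ lam * (1 + ρ * b k) :=
  stmt0_general k hk hdim ρ lam hρ hlam a b ha1 ha hρa hb1 hb q hsymm hpos ψ hortho hq
end Recurrences
end

section
/- Let n ≥ 1, let Ω ⊆ Ω' ⊆ ℝⁿ with Ω' open and bounded, and let ε, λ, μ > 0. Let f : ℝⁿ → ℝ be continuously differentiable with f = 0 outside Ω', ∫_{ℝⁿ} f² = 1, and ∫_{ℝⁿ} ‖∇f‖² ≤ λ. Let χ : ℝⁿ → ℝ be differentiable with 0 ≤ χ ≤ 1, ‖∇χ(x)‖ ≤ 1/ε for all x, and χ = 0 on Ω. If μ ∫_{ℝⁿ} (χf)² ≤ ∫_{ℝⁿ} ‖∇(χf)‖², then ∫_{ℝⁿ} χ² f² ≤ 2(1 + ε²λ)/(ε²μ). -/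
/-! By the Leibniz rule and `0 ≤ χ ≤ 1`, `‖∇(χf)‖ ≤ ‖∇f‖ + |f| / ε` pointwise, so
`(a + b)² ≤ 2a² + 2b²` gives `∫ ‖∇(χf)‖² ≤ 2 ∫ ‖∇f‖² + (2 / ε²) ∫ f² ≤ 2λ + 2 / ε²`.
The variational inequality bounds `μ ∫ (χf)²` by the left-hand side. Since `Ω'` is bounded,
`f` has compact support, which makes all the integrals involved finite. -/

open MeasureTheory

theorem Bornology.IsBounded.hasCompactSupport {X β : Type*} [PseudoMetricSpace X] [ProperSpace X]
    [Zero β] {s : Set X} {f : X → β} (hs : Bornology.IsBounded s) (hf : ∀ x ∉ s, f x = 0) :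
    HasCompactSupport f :=
  .intro hs.isCompact_closure fun x hx => hf x fun h => hx (subset_closure h)

theorem HasCompactSupport.integrable_sq {X : Type*} [TopologicalSpace X] [MeasurableSpace X]
    [OpensMeasurableSpace X] {ν : Measure X} [IsFiniteMeasureOnCompacts ν] {f : X → ℝ}
    (hf : HasCompactSupport f) (hc : Continuous f) :
    Integrable (fun x => f x ^ 2) ν := by
  have hsq : HasCompactSupport ((fun y : ℝ => y ^ 2) ∘ f) :=
    hf.comp_left (zero_pow two_ne_zero)
  exact (hc.pow 2).integrable_of_hasCompactSupport hsq

section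
variable {F : Type*} [NormedAddCommGroup F] [InnerProductSpace ℝ F] [CompleteSpace F]

theorem norm_gradient_eq_norm_fderiv (g : F → ℝ) (x : F) : ‖gradient g x‖ = ‖fderiv ℝ g x‖ :=
  (InnerProductSpace.toDual ℝ F).symm.norm_map _

theorem norm_gradient_mul_sq_le {χ f : F → ℝ} {x : F} {L : ℝ}
    (hχ : DifferentiableAt ℝ χ x) (hf : DifferentiableAt ℝ f x)
    (hχ0 : 0 ≤ χ x) (hχ1 : χ x ≤ 1) (hχL : ‖gradient χ x‖ ≤ L) :
    ‖gradient (fun y => χ y * f y) x‖ ^ 2 ≤ 2 * ‖gradient f x‖ ^ 2 + 2 * L ^ 2 * f x ^ 2 := by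
  have hle : ‖gradient (fun y => χ y * f y) x‖ ≤ ‖gradient f x‖ + |f x| * L := by
    simp only [norm_gradient_eq_norm_fderiv] at hχL ⊢
    rw [fderiv_fun_mul hχ hf]
    calc ‖χ x • fderiv ℝ f x + f x • fderiv ℝ χ x‖
        ≤ |χ x| * ‖fderiv ℝ f x‖ + |f x| * ‖fderiv ℝ χ x‖ := by
          simpa only [norm_smul, Real.norm_eq_abs] using
            norm_add_le (χ x • fderiv ℝ f x) (f x • fderiv ℝ χ x)
      _ ≤ ‖fderiv ℝ f x‖ + |f x| * L := by
          rw [abs_of_nonneg hχ0]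
          gcongr
          exact mul_le_of_le_one_left (norm_nonneg _) hχ1
  calc ‖gradient (fun y => χ y * f y) x‖ ^ 2 ≤ (‖gradient f x‖ + |f x| * L) ^ 2 := by gcongr
    _ ≤ 2 * ‖gradient f x‖ ^ 2 + 2 * L ^ 2 * f x ^ 2 := by
      nlinarith [sq_nonneg (‖gradient f x‖ - |f x| * L), sq_abs (f x)]

variable [MeasurableSpace F] [OpensMeasurableSpace F] {ν : Measure F}
  [IsFiniteMeasureOnCompacts ν]

theorem HasCompactSupport.integrable_norm_gradient_sq {f : F → ℝ} (hf : ContDiff ℝ 1 f)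
    (hfc : HasCompactSupport f) : Integrable (fun x => ‖gradient f x‖ ^ 2) ν := by
  have hsupp : HasCompactSupport ((fun y : F →L[ℝ] ℝ => ‖y‖ ^ 2) ∘ fderiv ℝ f) :=
    (hfc.fderiv (𝕜 := ℝ)).comp_left (by rw [norm_zero, zero_pow two_ne_zero])
  simp_rw [norm_gradient_eq_norm_fderiv]
  exact ((hf.continuous_fderiv one_ne_zero).norm.pow 2).integrable_of_hasCompactSupport hsupp

theorem integral_norm_gradient_mul_sq_le {χ f : F → ℝ} {L : ℝ}
    (hf : ContDiff ℝ 1 f) (hfc : HasCompactSupport f) (hχ : Differentiable ℝ χ)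
    (hχ0 : ∀ x, 0 ≤ χ x) (hχ1 : ∀ x, χ x ≤ 1) (hχL : ∀ x, ‖gradient χ x‖ ≤ L) :
    ∫ x, ‖gradient (fun y => χ y * f y) x‖ ^ 2 ∂ν ≤
      2 * (∫ x, ‖gradient f x‖ ^ 2 ∂ν) + 2 * L ^ 2 * ∫ x, f x ^ 2 ∂ν := by
  have hgrad := (hfc.integrable_norm_gradient_sq hf (ν := ν)).const_mul 2
  have hsq := (hfc.integrable_sq hf.continuous (ν := ν)).const_mul (2 * L ^ 2)
  rw [← integral_const_mul, ← integral_const_mul, ← integral_add hgrad hsq]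
  refine integral_mono_of_nonneg (.of_forall fun x => by positivity) (hgrad.add hsq)
    (.of_forall fun x => ?_)
  exact norm_gradient_mul_sq_le (hχ x) (hf.differentiable one_ne_zero x) (hχ0 x) (hχ1 x)
    (hχL x)

end

theorem stmt1_general (n : ℕ)
    (Ω' : Set (EuclideanSpace ℝ (Fin n)))
    (hbdd : Bornology.IsBounded Ω')
    (ε lam μ : ℝ) (hε : 0 < ε) (hμ : 0 < μ)
    (f χ : EuclideanSpace ℝ (Fin n) → ℝ)
    (hf : ContDiff ℝ 1 f) (hf0 : ∀ x ∉ Ω', f x = 0)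
    (hfL2 : ∫ x, (f x) ^ 2 = 1)
    (hfD : ∫ x, ‖gradient f x‖ ^ 2 ≤ lam)
    (hχd : Differentiable ℝ χ)
    (hχ0 : ∀ x, 0 ≤ χ x) (hχ1 : ∀ x, χ x ≤ 1)
    (hχg : ∀ x, ‖gradient χ x‖ ≤ 1 / ε)
    (hvar : μ * ∫ x, (χ x * f x) ^ 2 ≤
      ∫ x, ‖gradient (fun y => χ y * f y) x‖ ^ 2) :
    ∫ x, (χ x) ^ 2 * (f x) ^ 2 ≤ 2 * (1 + ε ^ 2 * lam) / (ε ^ 2 * μ) := by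
  have hgrad := integral_norm_gradient_mul_sq_le (ν := volume) hf (hbdd.hasCompactSupport hf0)
    hχd hχ0 hχ1 hχg
  have hbound : μ * ∫ x, (χ x * f x) ^ 2 ≤ 2 * lam + 2 / ε ^ 2 := by
    calc μ * ∫ x, (χ x * f x) ^ 2 ≤ 2 * (∫ x, ‖gradient f x‖ ^ 2) + 2 * (1 / ε) ^ 2 * 1 := by
          rw [hfL2] at hgrad; exact hvar.trans hgrad
      _ ≤ 2 * lam + 2 / ε ^ 2 := by rw [div_pow, one_pow, mul_one, mul_one_div]; gcongr
  simp_rw [← mul_pow]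
  rw [le_div_iff₀ (by positivity)]
  calc (∫ x, (χ x * f x) ^ 2) * (ε ^ 2 * μ) = ε ^ 2 * (μ * ∫ x, (χ x * f x) ^ 2) := by ring
    _ ≤ ε ^ 2 * (2 * lam + 2 / ε ^ 2) := by gcongr
    _ = 2 * (1 + ε ^ 2 * lam) := by field_simp; ring

/-- The bound `∫ χ² f² ≤ 2(1 + ε²λ)/(ε²μ)` for the cutoff χ vanishing on Ω,
coming from the variational characterization of μ = λ₁(Ω'∖Ω̄) applied to χf. -/
theorem stmt1 (n : ℕ) (hn : 1 ≤ n)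
    (Ω Ω' : Set (EuclideanSpace ℝ (Fin n)))
    (hsub : Ω ⊆ Ω') (hopen : IsOpen Ω') (hbdd : Bornology.IsBounded Ω')
    (ε lam μ : ℝ) (hε : 0 < ε) (hlam : 0 < lam) (hμ : 0 < μ)
    (f χ : EuclideanSpace ℝ (Fin n) → ℝ)
    (hf : ContDiff ℝ 1 f) (hf0 : ∀ x ∉ Ω', f x = 0)
    (hfL2 : ∫ x, (f x) ^ 2 = 1)
    (hfD : ∫ x, ‖gradient f x‖ ^ 2 ≤ lam)
    (hχd : Differentiable ℝ χ)
    (hχ0 : ∀ x, 0 ≤ χ x) (hχ1 : ∀ x, χ x ≤ 1)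
    (hχg : ∀ x, ‖gradient χ x‖ ≤ 1 / ε)
    (hχΩ : ∀ x ∈ Ω, χ x = 0)
    (hvar : μ * ∫ x, (χ x * f x) ^ 2 ≤
      ∫ x, ‖gradient (fun y => χ y * f y) x‖ ^ 2) :
    ∫ x, (χ x) ^ 2 * (f x) ^ 2 ≤ 2 * (1 + ε ^ 2 * lam) / (ε ^ 2 * μ) :=
  stmt1_general n Ω' hbdd ε lam μ hε hμ f χ hf hf0 hfL2 hfD hχd hχ0 hχ1 hχg hvar
end

section
/- Let Ω ⊆ ℝⁿ (n ≥ 2) be an open, bounded set and let ε₀ > 0. Suppose that for every ε with 0 < ε ≤ ε₀ one has (Ω^ε)_ε ⊆ Ω, where Ω^ε = {x ∈ ℝⁿ : dist(x, Ω) < ε} and (Ω^ε)_ε = {x ∈ Ω^ε : dist(x, (Ω^ε)ᶜ) > ε}. Then Ω satisfies the uniform external rolling ball condition with parameter ε₀: for every z ∈ ∂Ω and every r with 0 < r ≤ ε₀, there exists x ∈ Ωᶜ with dist(z, x) ≤ r and B(x, r) ⊆ Ωᶜ. -/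
/-- Proposition 3.5, first direction: if `(Ω^ε)_ε ⊆ Ω` for all `0 < ε ≤ ε₀`,
then Ω satisfies the uniform external rolling ball condition with parameter ε₀. -/
theorem stmt8 (n : ℕ) (hn : 2 ≤ n) (Ω : Set (EuclideanSpace ℝ (Fin n)))
    (hopen : IsOpen Ω) (hbdd : Bornology.IsBounded Ω)
    (ε₀ : ℝ) (hε₀ : 0 < ε₀)
    (h : ∀ ε : ℝ, 0 < ε → ε ≤ ε₀ →
      {x ∈ {y : EuclideanSpace ℝ (Fin n) | Metric.infDist y Ω < ε} |
        ε < Metric.infDist x ({y : EuclideanSpace ℝ (Fin n) | Metric.infDist y Ω < ε}ᶜ)}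
        ⊆ Ω) :
    ∀ z ∈ frontier Ω, ∀ r : ℝ, 0 < r → r ≤ ε₀ →
      ∃ x ∈ Ωᶜ, dist z x ≤ r ∧ Metric.ball x r ⊆ Ωᶜ := by
  intro z hz r hr hrε
  have hnefin : Nonempty (Fin n) := ⟨⟨0, by omega⟩⟩
  set S : Set (EuclideanSpace ℝ (Fin n)) :=
    {y : EuclideanSpace ℝ (Fin n) | Metric.infDist y Ω < r} with hS
  have hzcl : z ∈ closure Ω := hz.1
  have hzΩ : z ∉ Ω := fun hmem => hz.2 (by rwa [hopen.interior_eq])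
  have hΩne : Ω.Nonempty := by
    rcases Set.eq_empty_or_nonempty Ω with h0 | h0
    · rw [h0, closure_empty] at hzcl; exact absurd hzcl (Set.notMem_empty z)
    · exact h0
  have hz0 : Metric.infDist z Ω = 0 := Metric.infDist_zero_of_mem_closure hzcl
  have hzS : z ∈ S := by simp [hS, hz0, hr]
  have hSopen : IsOpen S :=
    isOpen_lt (Metric.continuous_infDist_pt Ω) continuous_const
  have hScne : Sᶜ.Nonempty := by
    rcases Set.eq_empty_or_nonempty Sᶜ with h0 | h0
    · exfalso
      have hSuniv : S = Set.univ := Set.compl_empty_iff.mp h0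
      have hSsub : S ⊆ Metric.thickening r Ω := by
        intro y hy
        exact (Metric.mem_thickening_iff_infDist_lt hΩne).mpr hy
      have : Bornology.IsBounded (Set.univ : Set (EuclideanSpace ℝ (Fin n))) := by
        rw [← hSuniv]
        exact (hbdd.thickening).subset hSsub
      exact NormedSpace.unbounded_univ ℝ (EuclideanSpace ℝ (Fin n)) this
    · exact h0
  have hle : Metric.infDist z Sᶜ ≤ r := by
    by_contra hlt
    push_neg at hlt
    exact hzΩ (h r hr hrε ⟨hzS, hlt⟩)
  obtain ⟨x, hxSc, hxd⟩ :=
    hSopen.isClosed_compl.exists_infDist_eq_dist hScne z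
  have hxr : r ≤ Metric.infDist x Ω := le_of_not_gt hxSc
  have hxΩ : x ∈ Ωᶜ := by
    intro hmem
    have := Metric.infDist_zero_of_mem hmem
    rw [this] at hxr; exact absurd hxr (not_le.mpr hr)
  refine ⟨x, hxΩ, hxd ▸ hle, ?_⟩
  intro y hy hyΩ
  have : Metric.infDist x Ω ≤ dist x y := Metric.infDist_le_dist_of_mem hyΩ
  rw [dist_comm] at this
  exact absurd (lt_of_le_of_lt (hxr.trans this) hy) (lt_irrefl r)
end

section
/- Let H be a real Hilbert space with a Hilbert (orthonormal) basis (e_j)_{j ≥ 1}. Let (λ'_j)_{j ≥ 1} be a nondecreasing sequence of nonnegative reals, let 0 = N_0 < N_1 < N_2 < … be a strictly increasing sequence of integers, and let (λ_j)_{j ≥ 1} be a nondecreasing sequence with λ_j ≥ λ'_j for all j and λ_{N_{k-1}+1} = λ_{N_k} for every k ≥ 1. For m ≥ 1 set δ_m = max_{1 ≤ j ≤ m} (λ_j − λ'_j), and for i ≥ 1 set Λ_i = min_{1 ≤ j ≤ i} (λ_{N_j+1} − λ_{N_j}), assumed positive. For each i ≥ 1 let P_i denote the orthogonal projection of H onto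 span{e_j : N_{i-1} < j ≤ N_i}. Fix i ≥ 1 and let f ∈ H with ‖f‖ = 1 be such that the series Σ_{j ≥ 1} λ'_j ⟨f, e_j⟩² converges with sum λ_{N_{i-1}+1}. If δ_{N_i+1} ≤ Λ_i/2, then 1 − ‖P_i(f)‖² ≤ (2/Λ_i) (δ_{N_{i-1}+1} + λ'_{N_i+1} Σ_{j=1}^{i-1} ‖P_j(f)‖²). -/
open RealInnerProductSpace Finset

/-! Write `c j = ⟪f, e j⟫ ^ 2`, so that `∑ c j = 1` and `∑ (λ'_j - λ) c j = 0` with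
`λ = λ_{N_{i-1}+1}`. Beyond the `i`-th block the weights satisfy
`λ'_j - λ ≥ λ'_{N_i+1} - λ ≥ Λ_i / 2`, because `λ_{N_i+1} - λ ≥ Λ_i` and
`λ_{N_i+1} - λ'_{N_i+1} ≤ δ_{N_i+1} ≤ Λ_i / 2`. Hence `Λ_i / 2` times the mass beyond the
block is at most the negative part of the sum, which lives on the earlier blocks (weight at most
`λ`) and on the `i`-th block (weight at most `δ_{N_{i-1}+1}`).
The Lean indices are shifted by one: `lam j`, `lam' j`, `e j` stand for `λ_{j+1}`, `λ'_{j+1}`,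
`e_{j+1}`. -/

theorem HilbertBasis.hasSum_real_inner_sq {ι E : Type*} [NormedAddCommGroup E]
    [InnerProductSpace ℝ E] (b : HilbertBasis ι ℝ E) (x : E) :
    HasSum (fun i => ⟪x, b i⟫ ^ 2) (‖x‖ ^ 2) := by
  simpa only [real_inner_comm x, ← sq, real_inner_self_eq_norm_sq] using
    b.hasSum_inner_mul_inner x x

theorem Orthonormal.norm_sum_smul_sq {ι E : Type*} [NormedAddCommGroup E]
    [InnerProductSpace ℝ E] {v : ι → E} (hv : Orthonormal ℝ v) (l : ι → ℝ) (s : Finset ι) :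
    ‖∑ i ∈ s, l i • v i‖ ^ 2 = ∑ i ∈ s, l i ^ 2 := by
  rw [← real_inner_self_eq_norm_sq, hv.inner_sum]
  simp [sq]

theorem Finset.sum_Icc_sum_Ico_eq_sum_range {M : Type*} [AddCommMonoid M] (c : ℕ → M)
    {N : ℕ → ℕ} (hN : Monotone N) (hN0 : N 0 = 0) (k : ℕ) :
    ∑ j ∈ Icc 1 k, ∑ m ∈ Ico (N (j - 1)) (N j), c m = ∑ m ∈ range (N k), c m := by
  induction k with
  | zero => simp [hN0]
  | succ k ih =>
    rw [sum_Icc_succ_top (by omega), ih, Nat.add_sub_cancel,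
      sum_range_add_sum_Ico _ (hN k.le_succ)]

section Concentration

variable {c μ : ℕ → ℝ} {ν : ℝ}

theorem sub_mul_one_sub_sum_range_le (hc : ∀ j, 0 ≤ c j) (hμ : Monotone μ)
    (hc1 : HasSum c 1) (hμc : HasSum (fun j => μ j * c j) ν) (b : ℕ) :
    (μ b - ν) * (1 - ∑ j ∈ range b, c j) ≤ ∑ j ∈ range b, (ν - μ j) * c j := by
  have hcentered : HasSum (fun j => (μ j - ν) * c j) 0 := by
    simpa only [sub_mul, mul_one, sub_self] using hμc.sub (hc1.mul_left ν)
  have htail := (hasSum_nat_add_iff' b).mpr hcentered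
  rw [zero_sub, ← sum_neg_distrib] at htail
  simp only [neg_mul_eq_neg_mul, neg_sub] at htail
  refine hasSum_le (fun n => ?_) (((hasSum_nat_add_iff' b).mpr hc1).mul_left (μ b - ν)) htail
  exact mul_le_mul_of_nonneg_right (by linarith [hμ (b.le_add_left n)]) (hc (n + b))

theorem mul_one_sub_sum_Ico_le (hc : ∀ j, 0 ≤ c j) (hμ0 : ∀ j, 0 ≤ μ j) (hμ : Monotone μ)
    (hc1 : HasSum c 1) (hμc : HasSum (fun j => μ j * c j) ν) {a b : ℕ} (hab : a ≤ b)
    {g d : ℝ} (hgap : ν + g ≤ μ b) (hμa : μ a ≤ ν) (hd : ν - μ a ≤ d) :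
    g * (1 - ∑ j ∈ Ico a b, c j) ≤ d + μ b * ∑ j ∈ range a, c j := by
  set S := ∑ j ∈ range a, c j
  set T := ∑ j ∈ Ico a b, c j
  have hS : 0 ≤ S := sum_nonneg fun j _ => hc j
  have hsplit : ∀ w : ℕ → ℝ, ∑ j ∈ range b, w j = ∑ j ∈ range a, w j + ∑ j ∈ Ico a b, w j :=
    fun w => (sum_range_add_sum_Ico w hab).symm
  have hmass : S + T ≤ 1 := hsplit c ▸ sum_le_hasSum _ (fun j _ => hc j) hc1
  have hearlier : ∑ j ∈ range a, (ν - μ j) * c j ≤ ν * S := by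
    rw [mul_sum]
    exact sum_le_sum fun j _ => mul_le_mul_of_nonneg_right (by linarith [hμ0 j]) (hc j)
  have hblock : ∑ j ∈ Ico a b, (ν - μ j) * c j ≤ d * T := by
    rw [mul_sum]
    refine sum_le_sum fun j hj => mul_le_mul_of_nonneg_right ?_ (hc j)
    linarith [hμ (mem_Ico.mp hj).1]
  have htail := sub_mul_one_sub_sum_range_le hc hμ hc1 hμc b
  rw [hsplit, hsplit] at htail
  have hT : d * T ≤ d := mul_le_of_le_one_right (by linarith) (by linarith)
  have hbeyond : g * (1 - (S + T)) ≤ (μ b - ν) * (1 - (S + T)) :=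
    mul_le_mul_of_nonneg_right (by linarith) (by linarith)
  have hgapS : (ν + g) * S ≤ μ b * S := mul_le_mul_of_nonneg_right hgap hS
  linarith

end Concentration

/-- Proposition 4.2 (technical proposition). Indices are shifted: the Lean index
`j : ℕ` corresponds to the paper index `j+1`, so that `e j`, `lam j`, `lam' j`
stand for the paper's `e_{j+1}`, `λ_{j+1}`, `λ'_{j+1}`, while `N` is as in the
paper (`N 0 = 0`).  The orthogonal projection `P_i` of the paper onto
`span{e_j : N_{i-1} < j ≤ N_i}` is written explicitly as
`f ↦ ∑_{j ∈ [N_{i-1}, N_i)} ⟪f, e j⟫ • e j` using the orthonormality of `e`. -/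
theorem stmt13 {H : Type*} [NormedAddCommGroup H] [InnerProductSpace ℝ H]
    (e : HilbertBasis ℕ ℝ H)
    (lam' lam : ℕ → ℝ) (N : ℕ → ℕ)
    (hlam'0 : ∀ j, 0 ≤ lam' j) (hlam'mono : Monotone lam')
    (hN0 : N 0 = 0) (hNmono : StrictMono N)
    (hle : ∀ j, lam' j ≤ lam j)
    (hblock : ∀ k, 1 ≤ k → lam (N (k - 1)) = lam (N k - 1))
    (δ Λ : ℕ → ℝ)
    (hδ : ∀ m (hm : 1 ≤ m), δ m =
      (Finset.range m).sup' (Finset.nonempty_range_iff.mpr (by omega))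
        (fun j => lam j - lam' j))
    (hΛ : ∀ i (hi : 1 ≤ i), Λ i =
      (Finset.Icc 1 i).inf' (Finset.nonempty_Icc.mpr (by omega))
        (fun j => lam (N j) - lam (N j - 1)))
    (hΛpos : ∀ i, 1 ≤ i → 0 < Λ i)
    (i : ℕ) (hi : 1 ≤ i) (f : H) (hf : ‖f‖ = 1)
    (heig : HasSum (fun j => lam' j * ⟪f, e j⟫ ^ 2) (lam (N (i - 1))))
    (hδΛ : δ (N i + 1) ≤ Λ i / 2) :
    1 - ‖∑ j ∈ Finset.Ico (N (i - 1)) (N i), ⟪f, e j⟫ • (e j : H)‖ ^ 2 ≤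
      2 / Λ i *
        (δ (N (i - 1) + 1) +
          lam' (N i) *
            ∑ j ∈ Finset.Icc 1 (i - 1),
              ‖∑ m ∈ Finset.Ico (N (j - 1)) (N j), ⟪f, e m⟫ • (e m : H)‖ ^ 2) := by
  have hδ_ge (m : ℕ) : lam m - lam' m ≤ δ (m + 1) := by
    rw [hδ (m + 1) m.succ_pos]
    exact le_sup' (fun j => lam j - lam' j) (self_mem_range_succ m)
  have hΛ_le : Λ i ≤ lam (N i) - lam (N i - 1) := by
    rw [hΛ i hi]
    exact inf'_le _ (mem_Icc.mpr ⟨hi, le_rfl⟩)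
  have hgap : lam (N (i - 1)) + Λ i / 2 ≤ lam' (N i) := by
    linarith [hblock i hi, hδ_ge (N i)]
  have hconc := mul_one_sub_sum_Ico_le (fun j => sq_nonneg ⟪f, e j⟫) hlam'0 hlam'mono
    (by simpa [hf] using e.hasSum_real_inner_sq f) heig (hNmono.monotone (Nat.sub_le i 1))
    hgap (hle _) (hδ_ge _)
  simp_rw [e.orthonormal.norm_sum_smul_sq]
  rw [sum_Icc_sum_Ico_eq_sum_range _ hNmono.monotone hN0, div_mul_eq_mul_div,
    le_div_iff₀ (hΛpos i hi)]
  linarith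
end
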